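/- Bayesian update of a Gaussian mixture prior under two Gaussian observations: let q(x_0 | x_s) = Σ_k A_k N(x_0; m_k, s_x² I) be a Gaussian mixture on ℝ^C, and let t < s in (0,1]. Then the conditional density proportional to [N(x_t; (1−t)x_0, t² I) / N(x_s; (1−s)x_0, s² I)] · q(x_0|x_s) is again a Gaussian mixture Σ_k A_k' N(x_0; μ_k', s'² I) with s'² = s_x²/(s_x² ζ + 1), μ_k' = (s_x² ν + m_k)/(s_x² ζ + 1), and weights A_k' ∝ exp(log A_k + m_k · (ν − ½ ζ m_k)/(s_x² ζ + 1)), where ν = (1−t)x_t/t² − (1−s)x_s/s² and ζ = (1−t)²/t² − (1−s)²/s², assuming s_x² ζ + 1 > 0. -/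

import Mathlib

open MeasureTheory Real Filter

noncomputable def gd (σ2 x μ : ℝ) : ℝ :=
  (Real.sqrt (2 * Real.pi * σ2))⁻¹ * Real.exp (-(x - μ)^2 / (2 * σ2))

noncomputable def gdC {D : ℕ} (σ2 : ℝ) (x μ : Fin D → ℝ) : ℝ :=
  ∏ i, gd σ2 (x i) (μ i)

noncomputable def fwdW {D : ℕ} (t : ℝ) (x x0 : Fin D → ℝ) : ℝ :=
  gdC (t^2) x ((1 - t) • x0)

noncomputable def dotp {C : ℕ} (a b : Fin C → ℝ) : ℝ := ∑ i, a i * b i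

lemma gdC_eq {D : ℕ} (σ2 : ℝ) (x μ : Fin D → ℝ) :
    gdC σ2 x μ = (Real.sqrt (2 * Real.pi * σ2))⁻¹ ^ D *
      Real.exp (∑ i, -(x i - μ i)^2 / (2 * σ2)) := by
  simp only [gdC, gd, Finset.prod_mul_distrib, Finset.prod_const,
    Finset.card_univ, Fintype.card_fin, ← Real.exp_sum]

lemma keyi (t s sx X Y Z M νi ζ : ℝ) (ht : t ≠ 0) (hs : s ≠ 0) (hsx : sx ≠ 0)
    (hD : sx^2*ζ+1 ≠ 0) (hνi : νi = (1-t)/t^2*X - (1-s)/s^2*Y)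
    (hζ : ζ = (1-t)^2/t^2 - (1-s)^2/s^2) :
    -(X-(1-t)*Z)^2/(2*t^2) - -(Y-(1-s)*Z)^2/(2*s^2) + (-(Z-M)^2/(2*sx^2))
    = (-X^2/(2*t^2) + Y^2/(2*s^2) + sx^2*νi^2/(2*(sx^2*ζ+1)))
      + M*(νi - ζ/2*M)/(sx^2*ζ+1)
      + (-(Z - (sx^2*ζ+1)⁻¹*(sx^2*νi+M))^2/(2*(sx^2/(sx^2*ζ+1)))) := by
  have h1 : -(X-(1-t)*Z)^2/(2*t^2) + (Y-(1-s)*Z)^2/(2*s^2)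
      = -X^2/(2*t^2) + Y^2/(2*s^2) + νi*Z - ζ/2*Z^2 := by
    subst hνi hζ; field_simp; ring
  have h2 : νi*Z - ζ/2*Z^2 - (Z-M)^2/(2*sx^2)
      = sx^2*νi^2/(2*(sx^2*ζ+1)) + M*(νi - ζ/2*M)/(sx^2*ζ+1)
        - (Z - (sx^2*ζ+1)⁻¹*(sx^2*νi+M))^2/(2*(sx^2/(sx^2*ζ+1))) := by
    generalize hE : sx^2*ζ+1 = E at hD ⊢
    field_simp
    rw [← hE]
    ring
  linear_combination h1 + h2

lemma key10 {Pt Ps Px Pp S Ak dk et es ex e0 ep : ℝ}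
    (hPp : Pp ≠ 0) (hS : S ≠ 0) (hAk : 0 < Ak)
    (heq : et - es + ex = e0 + dk + ep) :
    Pt * Real.exp et / (Ps * Real.exp es) * (Ak * (Px * Real.exp ex))
    = Pt / Ps * (Px / Pp) * Real.exp e0 * S *
        (Real.exp (Real.log Ak + dk) / S * (Pp * Real.exp ep)) := by
  have h1 : Real.exp (Real.log Ak + dk) = Ak * Real.exp dk := by
    rw [Real.exp_add, Real.exp_log hAk]
  have h2 : Real.exp et / Real.exp es * Real.exp ex
      = Real.exp e0 * Real.exp dk * Real.exp ep := by
    rw [← Real.exp_sub, ← Real.exp_add, heq, Real.exp_add, Real.exp_add]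
  calc Pt * Real.exp et / (Ps * Real.exp es) * (Ak * (Px * Real.exp ex))
      = Pt / Ps * Px * Ak * (Real.exp et / Real.exp es * Real.exp ex) := by ring
    _ = Pt / Ps * Px * Ak * (Real.exp e0 * Real.exp dk * Real.exp ep) := by rw [h2]
    _ = Pt / Ps * (Px / Pp) * Real.exp e0 * S *
        (Real.exp (Real.log Ak + dk) / S * (Pp * Real.exp ep)) := by
        rw [h1]
        have h3 : Pt / Ps * (Px / Pp) * Real.exp e0 * S *
            (Ak * Real.exp dk / S * (Pp * Real.exp ep))
            = Pt / Ps * Px * Ak * (Real.exp e0 * Real.exp dk * Real.exp ep) *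
              (S * S⁻¹) * (Pp * Pp⁻¹) := by ring
        rw [h3, mul_inv_cancel₀ hS, mul_inv_cancel₀ hPp, mul_one, mul_one]

/-- Closed-form Bayesian update of a Gaussian mixture prior under the Gaussian
likelihood ratio: the updated density is again a Gaussian mixture with the
stated variance, means, and softmax weights, up to a positive normalization. -/
theorem stmt10 {C K : ℕ} (A : Fin K → ℝ) (hA : ∀ k, 0 < A k)
    (m : Fin K → (Fin C → ℝ)) (sx : ℝ) (hsx : 0 < sx)
    (t s : ℝ) (ht : 0 < t) (hts : t < s) (hs : s ≤ 1)
    (xt xs : Fin C → ℝ)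
    (ν : Fin C → ℝ) (hν : ν = ((1 - t)/t^2) • xt - ((1 - s)/s^2) • xs)
    (ζ : ℝ) (hζ : ζ = (1 - t)^2/t^2 - (1 - s)^2/s^2)
    (hpos : 0 < sx^2 * ζ + 1)
    (s'2 : ℝ) (hs'2 : s'2 = sx^2 / (sx^2 * ζ + 1))
    (μ' : Fin K → (Fin C → ℝ))
    (hμ' : μ' = fun k => (sx^2 * ζ + 1)⁻¹ • (sx^2 • ν + m k))
    (a' : Fin K → ℝ)
    (ha' : a' = fun k => Real.log (A k) +
      dotp (m k) (ν - (ζ/2) • m k) / (sx^2 * ζ + 1))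
    (A' : Fin K → ℝ)
    (hA' : A' = fun k => Real.exp (a' k) / ∑ z, Real.exp (a' z)) :
    ∃ c > (0:ℝ), ∀ x0 : Fin C → ℝ,
      (gdC (t^2) xt ((1 - t) • x0) / gdC (s^2) xs ((1 - s) • x0)) *
        (∑ k, A k * gdC (sx^2) x0 (m k))
      = c * ∑ k, A' k * gdC s'2 x0 (μ' k) := by
  rcases Nat.eq_zero_or_pos K with hK | hK
  · subst hK
    exact ⟨1, one_pos, fun x0 => by simp⟩
  haveI : Nonempty (Fin K) := ⟨⟨0, hK⟩⟩
  have hs0 : 0 < s := ht.trans hts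
  have ht' : t ≠ 0 := ne_of_gt ht
  have hs' : s ≠ 0 := ne_of_gt hs0
  have hsx' : sx ≠ 0 := ne_of_gt hsx
  have hD : sx^2 * ζ + 1 ≠ 0 := ne_of_gt hpos
  have ht2 : (0:ℝ) < t^2 := by positivity
  have hs2 : (0:ℝ) < s^2 := by positivity
  have hsx2 : (0:ℝ) < sx^2 := by positivity
  have hs'2pos : 0 < s'2 := by rw [hs'2]; positivity
  have sqpos : ∀ u : ℝ, 0 < u → 0 < Real.sqrt (2 * Real.pi * u) := fun u hu =>
    Real.sqrt_pos.mpr (by have := Real.pi_pos; positivity)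
  have hS0 : 0 < ∑ z, Real.exp (Real.log (A z) +
      dotp (m z) (ν - (ζ/2) • m z) / (sx^2 * ζ + 1)) :=
    Finset.sum_pos (fun z _ => Real.exp_pos _) Finset.univ_nonempty
  refine ⟨(Real.sqrt (2 * Real.pi * t^2))⁻¹ ^ C / (Real.sqrt (2 * Real.pi * s^2))⁻¹ ^ C *
      ((Real.sqrt (2 * Real.pi * sx^2))⁻¹ ^ C / (Real.sqrt (2 * Real.pi * s'2))⁻¹ ^ C) *
      Real.exp (∑ i, (-(xt i)^2/(2*t^2) + (xs i)^2/(2*s^2) +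
        sx^2*(ν i)^2/(2*(sx^2*ζ+1)))) *
      (∑ z, Real.exp (Real.log (A z) +
        dotp (m z) (ν - (ζ/2) • m z) / (sx^2 * ζ + 1))), ?_, fun x0 => ?_⟩
  · have h1 := sqpos _ ht2
    have h2 := sqpos _ hs2
    have h3 := sqpos _ hsx2
    have h4 := sqpos _ hs'2pos
    have := Real.exp_pos (∑ i, (-(xt i)^2/(2*t^2) + (xs i)^2/(2*s^2) +
        sx^2*(ν i)^2/(2*(sx^2*ζ+1))))
    positivity
  · rw [Finset.mul_sum, Finset.mul_sum]
    refine Finset.sum_congr rfl (fun k _ => ?_)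
    simp only [gdC_eq, hA', ha']
    refine key10 (by positivity) (ne_of_gt hS0) (hA k) ?_
    simp only [dotp, Pi.smul_apply, smul_eq_mul, Pi.sub_apply, Pi.add_apply, hμ', hs'2]
    rw [Finset.sum_div, ← Finset.sum_sub_distrib, ← Finset.sum_add_distrib,
      ← Finset.sum_add_distrib, ← Finset.sum_add_distrib]
    refine Finset.sum_congr rfl (fun i _ => ?_)
    have hνi : ν i = (1-t)/t^2 * xt i - (1-s)/s^2 * xs i := by
      rw [hν]; simp [Pi.sub_apply, Pi.smul_apply, smul_eq_mul]
    linear_combination keyi t s sx (xt i) (xs i) (x0 i) (m k i) (ν i) ζ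
      ht' hs' hsx' hD hνi hζ
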